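/- The bracket [·,·]_φ on 𝔅 ⊕ 𝔅' satisfies the Jacobi identity if and only if for all X, Y ∈ 𝔅 and α, β ∈ 𝔅' (identified with the elements (X,0) and (0,α) of 𝔅 ⊕ 𝔅'): R^∇(X,α)Y = R^∇(Y,α)X and R^∇(α,X)β = R^∇(β,X)α. (Proposition 'pr13', equivalence (i) ⟺ (ii), Section 3; this is the compatibility criterion under which the phase space 𝔅 ⊕ 𝔅' becomes a para-Kähler Lie algebroid, Theorem 'theoextendible'.) -/
import Mathlib


/-!
Statement 11 (Proposition `pr13`, (i) ⟺ (ii), Section 3): for two left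
symmetric algebroids in duality, the phase-space bracket `[·,·]_φ` satisfies
the Jacobi identity iff `R^∇(X,α)Y = R^∇(Y,α)X` and
`R^∇(α,X)β = R^∇(β,X)α`.
-/

section

variable {R : Type*} [CommRing R] [Algebra ℝ R]
variable {B : Type*} [AddCommGroup B] [Module R B] [Module ℝ B] [IsScalarTower ℝ R B]
variable {B' : Type*} [AddCommGroup B'] [Module R B'] [Module ℝ B'] [IsScalarTower ℝ R B']

/-- The phase-space product `∇_{(X,α)}(Y,β) = (S_X Y + T*_α Y, S*_X β + T_α β)`. -/
def nabP (S : B →ₗ[ℝ] B →ₗ[ℝ] B) (T : B' →ₗ[ℝ] B' →ₗ[ℝ] B')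
    (Sstar : B → B' → B') (Tstar : B' → B → B) (u v : B × B') : B × B' :=
  (S u.1 v.1 + Tstar u.2 v.1, Sstar u.1 v.2 + T u.2 v.2)

/-- The phase-space bracket `[u,v]_φ = ∇_u v − ∇_v u`. -/
def braP (S : B →ₗ[ℝ] B →ₗ[ℝ] B) (T : B' →ₗ[ℝ] B' →ₗ[ℝ] B')
    (Sstar : B → B' → B') (Tstar : B' → B → B) (u v : B × B') : B × B' :=
  nabP S T Sstar Tstar u v - nabP S T Sstar Tstar v u

/-- The curvature `R^∇(u,v)w = ∇_u∇_v w − ∇_v∇_u w − ∇_{[u,v]_φ} w`. -/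
def curvP (S : B →ₗ[ℝ] B →ₗ[ℝ] B) (T : B' →ₗ[ℝ] B' →ₗ[ℝ] B')
    (Sstar : B → B' → B') (Tstar : B' → B → B) (u v w : B × B') : B × B' :=
  nabP S T Sstar Tstar u (nabP S T Sstar Tstar v w)
    - nabP S T Sstar Tstar v (nabP S T Sstar Tstar u w)
    - nabP S T Sstar Tstar (braP S T Sstar Tstar u v) w

namespace Aux11

variable (S : B →ₗ[ℝ] B →ₗ[ℝ] B) (T : B' →ₗ[ℝ] B' →ₗ[ℝ] B')
variable (Sstar : B → B' → B') (Tstar : B' → B → B)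

/-- Cyclic sum of curvature. -/
def cycP (u v w : B × B') : B × B' :=
  curvP S T Sstar Tstar u v w + curvP S T Sstar Tstar v w u + curvP S T Sstar Tstar w u v

lemma cyc_rot (u v w : B × B') :
    cycP S T Sstar Tstar u v w = cycP S T Sstar Tstar v w u := by
  simp only [cycP]; abel

section Additive
variable
  (hSl : ∀ (X X' : B) (α : B'), Sstar (X + X') α = Sstar X α + Sstar X' α)
  (hSr : ∀ (X : B) (α α' : B'), Sstar X (α + α') = Sstar X α + Sstar X α')
  (hTl : ∀ (α α' : B') (x : B), Tstar (α + α') x = Tstar α x + Tstar α' x)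
  (hTr : ∀ (α : B') (x x' : B), Tstar α (x + x') = Tstar α x + Tstar α x')

include hSl hSr hTl hTr
set_option linter.unusedSectionVars false

lemma nab_add_left (u v w : B × B') :
    nabP S T Sstar Tstar (u + v) w = nabP S T Sstar Tstar u w + nabP S T Sstar Tstar v w := by
  simp [nabP, Prod.ext_iff, hSl, hTl, map_add, LinearMap.add_apply]
  constructor <;> abel

lemma nab_add_right (u v w : B × B') :
    nabP S T Sstar Tstar u (v + w) = nabP S T Sstar Tstar u v + nabP S T Sstar Tstar u w := by
  simp [nabP, Prod.ext_iff, hSr, hTr, map_add, LinearMap.add_apply]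
  constructor <;> abel

lemma nab_zero_left (w : B × B') : nabP S T Sstar Tstar 0 w = 0 := by
  have h := nab_add_left S T Sstar Tstar hSl hSr hTl hTr 0 0 w
  simpa using h.symm

lemma nab_zero_right (u : B × B') : nabP S T Sstar Tstar u 0 = 0 := by
  have h := nab_add_right S T Sstar Tstar hSl hSr hTl hTr u 0 0
  simpa using h.symm

lemma nab_sub_left (u v w : B × B') :
    nabP S T Sstar Tstar (u - v) w = nabP S T Sstar Tstar u w - nabP S T Sstar Tstar v w := by
  have h := nab_add_left S T Sstar Tstar hSl hSr hTl hTr (u - v) v w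
  rw [sub_add_cancel] at h
  rw [h]; abel

lemma nab_sub_right (u v w : B × B') :
    nabP S T Sstar Tstar u (v - w) = nabP S T Sstar Tstar u v - nabP S T Sstar Tstar u w := by
  have h := nab_add_right S T Sstar Tstar hSl hSr hTl hTr u (v - w) w
  rw [sub_add_cancel] at h
  rw [h]; abel

lemma jacobi_eq_neg_cyc (u v w : B × B') :
    braP S T Sstar Tstar (braP S T Sstar Tstar u v) w
      + braP S T Sstar Tstar (braP S T Sstar Tstar v w) u
      + braP S T Sstar Tstar (braP S T Sstar Tstar w u) v
    = -(curvP S T Sstar Tstar u v w + curvP S T Sstar Tstar v w u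
        + curvP S T Sstar Tstar w u v) := by
  simp only [braP, curvP, nab_sub_left S T Sstar Tstar hSl hSr hTl hTr,
    nab_sub_right S T Sstar Tstar hSl hSr hTl hTr]
  abel

lemma curv_antisymm (u v w : B × B') :
    curvP S T Sstar Tstar u v w = -curvP S T Sstar Tstar v u w := by
  simp only [curvP, braP, nab_sub_left S T Sstar Tstar hSl hSr hTl hTr]
  abel

lemma curv_add₁ (u u' v w : B × B') :
    curvP S T Sstar Tstar (u + u') v w
      = curvP S T Sstar Tstar u v w + curvP S T Sstar Tstar u' v w := by
  simp only [curvP, braP, nab_sub_left S T Sstar Tstar hSl hSr hTl hTr,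
    nab_add_left S T Sstar Tstar hSl hSr hTl hTr, nab_add_right S T Sstar Tstar hSl hSr hTl hTr]
  abel

lemma curv_add₂ (u v v' w : B × B') :
    curvP S T Sstar Tstar u (v + v') w
      = curvP S T Sstar Tstar u v w + curvP S T Sstar Tstar u v' w := by
  simp only [curvP, braP, nab_sub_left S T Sstar Tstar hSl hSr hTl hTr,
    nab_add_left S T Sstar Tstar hSl hSr hTl hTr, nab_add_right S T Sstar Tstar hSl hSr hTl hTr]
  abel

lemma curv_add₃ (u v w w' : B × B') :
    curvP S T Sstar Tstar u v (w + w')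
      = curvP S T Sstar Tstar u v w + curvP S T Sstar Tstar u v w' := by
  simp only [curvP, braP, nab_sub_left S T Sstar Tstar hSl hSr hTl hTr,
    nab_add_right S T Sstar Tstar hSl hSr hTl hTr]
  abel

lemma cyc_add₁ (u u' v w : B × B') :
    cycP S T Sstar Tstar (u + u') v w
      = cycP S T Sstar Tstar u v w + cycP S T Sstar Tstar u' v w := by
  simp only [cycP, curv_add₁ S T Sstar Tstar hSl hSr hTl hTr,
    curv_add₂ S T Sstar Tstar hSl hSr hTl hTr, curv_add₃ S T Sstar Tstar hSl hSr hTl hTr]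
  abel

lemma cyc_add₂ (u v v' w : B × B') :
    cycP S T Sstar Tstar u (v + v') w
      = cycP S T Sstar Tstar u v w + cycP S T Sstar Tstar u v' w := by
  simp only [cycP, curv_add₁ S T Sstar Tstar hSl hSr hTl hTr,
    curv_add₂ S T Sstar Tstar hSl hSr hTl hTr, curv_add₃ S T Sstar Tstar hSl hSr hTl hTr]
  abel

lemma cyc_add₃ (u v w w' : B × B') :
    cycP S T Sstar Tstar u v (w + w')
      = cycP S T Sstar Tstar u v w + cycP S T Sstar Tstar u v w' := by
  simp only [cycP, curv_add₁ S T Sstar Tstar hSl hSr hTl hTr,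
    curv_add₂ S T Sstar Tstar hSl hSr hTl hTr, curv_add₃ S T Sstar Tstar hSl hSr hTl hTr]
  abel

end Additive

section Dual
variable (pa : B' →ₗ[R] B →ₗ[R] R)
  (hnd1 : ∀ α : B', (∀ X : B, pa α X = 0) → α = 0)
  (hnd2 : ∀ X : B, (∀ α : B', pa α X = 0) → X = 0)
  (ρ₀ : B →ₗ[R] Derivation ℝ R R) (ρ₁ : B' →ₗ[R] Derivation ℝ R R)
  (hSstar : ∀ (X : B) (α : B') (Y : B),
      pa (Sstar X α) Y = ρ₀ X (pa α Y) - pa α (S X Y))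
  (hTstar : ∀ (α : B') (X : B) (β : B'),
      pa β (Tstar α X) = ρ₁ α (pa β X) - pa (T α β) X)
  (hSflat : ∀ X Y Z : B, S X (S Y Z) - S Y (S X Z) = S (S X Y - S Y X) Z)
  (hTflat : ∀ α β γ : B', T α (T β γ) - T β (T α γ) = T (T α β - T β α) γ)
  (hρ₀ : ∀ (X Y : B) (f : R),
      ρ₀ (S X Y - S Y X) f = ρ₀ X (ρ₀ Y f) - ρ₀ Y (ρ₀ X f))
  (hρ₁ : ∀ (α β : B') (f : R),
      ρ₁ (T α β - T β α) f = ρ₁ α (ρ₁ β f) - ρ₁ β (ρ₁ α f))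

set_option linter.unusedSectionVars false

include hnd1 in
lemma ext1 {a b : B'} (h : ∀ Y, pa a Y = pa b Y) : a = b := by
  have h0 : a - b = 0 := hnd1 _ (fun Y => by
    simp [map_sub, LinearMap.sub_apply, h])
  exact sub_eq_zero.mp h0

include hnd2 in
lemma ext2 {x y : B} (h : ∀ β : B', pa β x = pa β y) : x = y := by
  have h0 : x - y = 0 := hnd2 _ (fun β => by
    simp [map_sub, h])
  exact sub_eq_zero.mp h0

include hnd1 hSstar in
lemma sstar_add_left (X X' : B) (α : B') :
    Sstar (X + X') α = Sstar X α + Sstar X' α := by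
  refine ext1 pa hnd1 fun Y => ?_
  simp [hSstar, map_add, LinearMap.add_apply, Derivation.add_apply]
  ring

include hnd1 hSstar in
lemma sstar_add_right (X : B) (α α' : B') :
    Sstar X (α + α') = Sstar X α + Sstar X α' := by
  refine ext1 pa hnd1 fun Y => ?_
  simp [hSstar, map_add, LinearMap.add_apply]
  ring

include hnd2 hTstar in
lemma tstar_add_left (α α' : B') (x : B) :
    Tstar (α + α') x = Tstar α x + Tstar α' x := by
  refine ext2 pa hnd2 fun β => ?_
  simp [hTstar, map_add, LinearMap.add_apply, Derivation.add_apply]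
  ring

include hnd2 hTstar in
lemma tstar_add_right (α : B') (x x' : B) :
    Tstar α (x + x') = Tstar α x + Tstar α x' := by
  refine ext2 pa hnd2 fun β => ?_
  simp [hTstar, map_add, LinearMap.add_apply]
  ring

include hnd1 hSstar in
lemma sstar_zero_left (α : B') : Sstar 0 α = 0 := by
  have h := sstar_add_left S Sstar pa hnd1 ρ₀ hSstar 0 0 α
  simpa using h.symm

include hnd1 hSstar in
lemma sstar_zero_right (X : B) : Sstar X 0 = 0 := by
  have h := sstar_add_right S Sstar pa hnd1 ρ₀ hSstar X 0 0
  simpa using h.symm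

include hnd2 hTstar in
lemma tstar_zero_left (x : B) : Tstar 0 x = 0 := by
  have h := tstar_add_left T Tstar pa hnd2 ρ₁ hTstar 0 0 x
  simpa using h.symm

include hnd2 hTstar in
lemma tstar_zero_right (α : B') : Tstar α 0 = 0 := by
  have h := tstar_add_right T Tstar pa hnd2 ρ₁ hTstar α 0 0
  simpa using h.symm

include hnd1 hSstar hρ₀ hSflat in
lemma sstar_flat (X Y : B) (α : B') :
    Sstar X (Sstar Y α) - Sstar Y (Sstar X α) = Sstar (S X Y - S Y X) α := by
  refine ext1 pa hnd1 fun Z => ?_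
  have e' : pa α (S X (S Y Z)) - pa α (S Y (S X Z)) = pa α (S (S X Y) Z) - pa α (S (S Y X) Z) := by
    rw [← map_sub, hSflat, map_sub, LinearMap.sub_apply, map_sub]
  have r := hρ₀ X Y (pa α Z)
  rw [map_sub, Derivation.sub_apply] at r
  simp only [map_sub, LinearMap.sub_apply, Derivation.sub_apply, hSstar]
  linear_combination -e' - r

include hnd2 hTstar hρ₁ hTflat in
lemma tstar_flat (α β : B') (x : B) :
    Tstar α (Tstar β x) - Tstar β (Tstar α x) = Tstar (T α β - T β α) x := by
  refine ext2 pa hnd2 fun γ => ?_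
  have e' : pa (T α (T β γ)) x - pa (T β (T α γ)) x = pa (T (T α β) γ) x - pa (T (T β α) γ) x := by
    rw [← LinearMap.sub_apply, ← map_sub, hTflat, map_sub, LinearMap.sub_apply, map_sub, LinearMap.sub_apply]
  have r := hρ₁ α β (pa γ x)
  rw [map_sub, Derivation.sub_apply] at r
  simp only [map_sub, LinearMap.sub_apply, Derivation.sub_apply, hTstar]
  linear_combination -e' - r

include hnd1 hnd2 hSstar hTstar hρ₀ hSflat in
lemma curv_BBb (X Y : B) (α : B') :
    curvP S T Sstar Tstar (X, (0:B')) (Y, (0:B')) ((0:B), α) = 0 := by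
  have z1 : ∀ x : B, Sstar x (0:B') = 0 := sstar_zero_right S Sstar pa hnd1 ρ₀ hSstar
  have z2 : ∀ a : B', Tstar a (0:B) = 0 := tstar_zero_right T Tstar pa hnd2 ρ₁ hTstar
  have z3 : ∀ x : B, Tstar (0:B') x = 0 := tstar_zero_left T Tstar pa hnd2 ρ₁ hTstar
  have z4 : ∀ a : B', Sstar (0:B) a = 0 := sstar_zero_left S Sstar pa hnd1 ρ₀ hSstar
  have key := sstar_flat S Sstar pa hnd1 ρ₀ hSstar hSflat hρ₀ X Y α
  simp [curvP, braP, nabP, Prod.ext_iff, z1, z2, z3, z4]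
  rw [key, sub_self]

include hnd1 hnd2 hSstar hTstar hρ₁ hTflat in
lemma curv_bbB (α β : B') (X : B) :
    curvP S T Sstar Tstar ((0:B), α) ((0:B), β) (X, (0:B')) = 0 := by
  have z1 : ∀ x : B, Sstar x (0:B') = 0 := sstar_zero_right S Sstar pa hnd1 ρ₀ hSstar
  have z2 : ∀ a : B', Tstar a (0:B) = 0 := tstar_zero_right T Tstar pa hnd2 ρ₁ hTstar
  have z3 : ∀ x : B, Tstar (0:B') x = 0 := tstar_zero_left T Tstar pa hnd2 ρ₁ hTstar
  have z4 : ∀ a : B', Sstar (0:B) a = 0 := sstar_zero_left S Sstar pa hnd1 ρ₀ hSstar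
  have key := tstar_flat T Tstar pa hnd2 ρ₁ hTstar hTflat hρ₁ α β X
  simp [curvP, braP, nabP, Prod.ext_iff, z1, z2, z3, z4]
  rw [key, sub_self]

include hnd1 hnd2 hSstar hTstar hSflat in
lemma curv_BBB (X Y Z : B) :
    curvP S T Sstar Tstar (X, (0:B')) (Y, (0:B')) (Z, (0:B')) = 0 := by
  have z1 : ∀ x : B, Sstar x (0:B') = 0 := sstar_zero_right S Sstar pa hnd1 ρ₀ hSstar
  have z2 : ∀ a : B', Tstar a (0:B) = 0 := tstar_zero_right T Tstar pa hnd2 ρ₁ hTstar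
  have z3 : ∀ x : B, Tstar (0:B') x = 0 := tstar_zero_left T Tstar pa hnd2 ρ₁ hTstar
  have key := hSflat X Y Z
  simp [curvP, braP, nabP, Prod.ext_iff, z1, z2, z3]
  rw [key, map_sub, LinearMap.sub_apply, sub_self]

include hnd1 hnd2 hSstar hTstar hTflat in
lemma curv_bbb (α β γ : B') :
    curvP S T Sstar Tstar ((0:B), α) ((0:B), β) ((0:B), γ) = 0 := by
  have z2 : ∀ a : B', Tstar a (0:B) = 0 := tstar_zero_right T Tstar pa hnd2 ρ₁ hTstar
  have z3 : ∀ x : B, Tstar (0:B') x = 0 := tstar_zero_left T Tstar pa hnd2 ρ₁ hTstar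
  have z4 : ∀ a : B', Sstar (0:B) a = 0 := sstar_zero_left S Sstar pa hnd1 ρ₀ hSstar
  have key := hTflat α β γ
  simp [curvP, braP, nabP, Prod.ext_iff, z2, z3, z4]
  rw [key, map_sub, LinearMap.sub_apply, sub_self]

end Dual

end Aux11

theorem stmt11
    (pa : B' →ₗ[R] B →ₗ[R] R)
    (hnd1 : ∀ α : B', (∀ X : B, pa α X = 0) → α = 0)
    (hnd2 : ∀ X : B, (∀ α : B', pa α X = 0) → X = 0)
    (ρ₀ : B →ₗ[R] Derivation ℝ R R) (ρ₁ : B' →ₗ[R] Derivation ℝ R R)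
    (S : B →ₗ[ℝ] B →ₗ[ℝ] B) (T : B' →ₗ[ℝ] B' →ₗ[ℝ] B')
    (hS1 : ∀ (f : R) (X Y : B), S (f • X) Y = f • S X Y)
    (hS2 : ∀ (X : B) (f : R) (Y : B), S X (f • Y) = f • S X Y + ρ₀ X f • Y)
    (hT1 : ∀ (f : R) (α β : B'), T (f • α) β = f • T α β)
    (hT2 : ∀ (α : B') (f : R) (β : B'), T α (f • β) = f • T α β + ρ₁ α f • β)
    (hSflat : ∀ X Y Z : B, S X (S Y Z) - S Y (S X Z) = S (S X Y - S Y X) Z)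
    (hTflat : ∀ α β γ : B', T α (T β γ) - T β (T α γ) = T (T α β - T β α) γ)
    (hρ₀ : ∀ (X Y : B) (f : R),
      ρ₀ (S X Y - S Y X) f = ρ₀ X (ρ₀ Y f) - ρ₀ Y (ρ₀ X f))
    (hρ₁ : ∀ (α β : B') (f : R),
      ρ₁ (T α β - T β α) f = ρ₁ α (ρ₁ β f) - ρ₁ β (ρ₁ α f))
    (Sstar : B → B' → B')
    (hSstar : ∀ (X : B) (α : B') (Y : B),
      pa (Sstar X α) Y = ρ₀ X (pa α Y) - pa α (S X Y))
    (Tstar : B' → B → B)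
    (hTstar : ∀ (α : B') (X : B) (β : B'),
      pa β (Tstar α X) = ρ₁ α (pa β X) - pa (T α β) X) :
    (∀ u v w : B × B',
      braP S T Sstar Tstar (braP S T Sstar Tstar u v) w
        + braP S T Sstar Tstar (braP S T Sstar Tstar v w) u
        + braP S T Sstar Tstar (braP S T Sstar Tstar w u) v = 0)
    ↔
    ((∀ (X Y : B) (α : B'),
        curvP S T Sstar Tstar (X, (0 : B')) ((0 : B), α) (Y, (0 : B'))
          = curvP S T Sstar Tstar (Y, (0 : B')) ((0 : B), α) (X, (0 : B')))
     ∧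
     (∀ (α β : B') (X : B),
        curvP S T Sstar Tstar ((0 : B), α) (X, (0 : B')) ((0 : B), β)
          = curvP S T Sstar Tstar ((0 : B), β) (X, (0 : B')) ((0 : B), α))) := by
  have hSl := Aux11.sstar_add_left S Sstar pa hnd1 ρ₀ hSstar
  have hSr := Aux11.sstar_add_right S Sstar pa hnd1 ρ₀ hSstar
  have hTl := Aux11.tstar_add_left T Tstar pa hnd2 ρ₁ hTstar
  have hTr := Aux11.tstar_add_right T Tstar pa hnd2 ρ₁ hTstar
  have hjac := Aux11.jacobi_eq_neg_cyc S T Sstar Tstar hSl hSr hTl hTr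
  have hanti := Aux11.curv_antisymm S T Sstar Tstar hSl hSr hTl hTr
  have hrot := Aux11.cyc_rot S T Sstar Tstar
  have hBBb := Aux11.curv_BBb (S := S) (T := T) (Sstar := Sstar) (Tstar := Tstar)
    (pa := pa) (hnd1 := hnd1) (hnd2 := hnd2) (ρ₀ := ρ₀) (ρ₁ := ρ₁)
    (hSstar := hSstar) (hTstar := hTstar) (hSflat := hSflat) (hρ₀ := hρ₀)
  have hbbB := Aux11.curv_bbB (S := S) (T := T) (Sstar := Sstar) (Tstar := Tstar)
    (pa := pa) (hnd1 := hnd1) (hnd2 := hnd2) (ρ₀ := ρ₀) (ρ₁ := ρ₁)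
    (hSstar := hSstar) (hTstar := hTstar) (hTflat := hTflat) (hρ₁ := hρ₁)
  have hBBB := Aux11.curv_BBB (S := S) (T := T) (Sstar := Sstar) (Tstar := Tstar)
    (pa := pa) (hnd1 := hnd1) (hnd2 := hnd2) (ρ₀ := ρ₀) (ρ₁ := ρ₁)
    (hSstar := hSstar) (hTstar := hTstar) (hSflat := hSflat)
  have hbbb := Aux11.curv_bbb (S := S) (T := T) (Sstar := Sstar) (Tstar := Tstar)
    (pa := pa) (hnd1 := hnd1) (hnd2 := hnd2) (ρ₀ := ρ₀) (ρ₁ := ρ₁)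
    (hSstar := hSstar) (hTstar := hTstar) (hTflat := hTflat)
  constructor
  · intro hJ
    have hcyc : ∀ u v w : B × B', Aux11.cycP S T Sstar Tstar u v w = 0 := by
      intro u v w
      have h := hjac u v w
      rw [hJ u v w] at h
      have h0 := neg_eq_zero.mp h.symm
      simpa [Aux11.cycP] using h0
    constructor
    · intro X Y α
      have h := hcyc (X, (0 : B')) ((0 : B), α) (Y, (0 : B'))
      simp only [Aux11.cycP] at h
      rw [hBBb Y X α, add_zero,
        hanti ((0 : B), α) (Y, (0 : B')) (X, (0 : B')), add_neg_eq_zero] at h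
      exact h
    · intro α β X
      have h := hcyc ((0 : B), α) (X, (0 : B')) ((0 : B), β)
      simp only [Aux11.cycP] at h
      rw [hbbB β α X, add_zero,
        hanti (X, (0 : B')) ((0 : B), β) ((0 : B), α), add_neg_eq_zero] at h
      exact h
  · rintro ⟨h1, h2⟩ u v w
    rw [hjac u v w, neg_eq_zero]
    have goal_eq : curvP S T Sstar Tstar u v w + curvP S T Sstar Tstar v w u
        + curvP S T Sstar Tstar w u v = Aux11.cycP S T Sstar Tstar u v w := rfl
    rw [goal_eq]
    have p3 : ∀ (X Y : B) (α : B'),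
        Aux11.cycP S T Sstar Tstar (X, (0 : B')) (Y, (0 : B')) ((0 : B), α) = 0 := by
      intro X Y α
      simp only [Aux11.cycP]
      rw [hBBb X Y α, hanti ((0 : B), α) (X, (0 : B')) (Y, (0 : B')), h1 X Y α]
      abel
    have p4 : ∀ (α β : B') (X : B),
        Aux11.cycP S T Sstar Tstar ((0 : B), α) ((0 : B), β) (X, (0 : B')) = 0 := by
      intro α β X
      simp only [Aux11.cycP]
      rw [hbbB α β X, hanti (X, (0 : B')) ((0 : B), α) ((0 : B), β), h2 α β X]
      abel
    have p1 : ∀ X Y Z : B,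
        Aux11.cycP S T Sstar Tstar (X, (0 : B')) (Y, (0 : B')) (Z, (0 : B')) = 0 := by
      intro X Y Z
      simp only [Aux11.cycP]
      rw [hBBB X Y Z, hBBB Y Z X, hBBB Z X Y]
      abel
    have p2 : ∀ α β γ : B',
        Aux11.cycP S T Sstar Tstar ((0 : B), α) ((0 : B), β) ((0 : B), γ) = 0 := by
      intro α β γ
      simp only [Aux11.cycP]
      rw [hbbb α β γ, hbbb β γ α, hbbb γ α β]
      abel
    have ca1 := Aux11.cyc_add₁ S T Sstar Tstar hSl hSr hTl hTr
    have ca2 := Aux11.cyc_add₂ S T Sstar Tstar hSl hSr hTl hTr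
    have ca3 := Aux11.cyc_add₃ S T Sstar Tstar hSl hSr hTl hTr
    have hu : u = (u.1, (0 : B')) + ((0 : B), u.2) := by ext <;> simp
    have hv : v = (v.1, (0 : B')) + ((0 : B), v.2) := by ext <;> simp
    have hw : w = (w.1, (0 : B')) + ((0 : B), w.2) := by ext <;> simp
    rw [hu, hv, hw, ca1, ca2, ca2, ca3, ca3, ca3, ca3]
    rw [p1, p2, p3, p4]
    rw [hrot (u.1, (0:B')) ((0:B), v.2) (w.1, (0:B')),
      hrot ((0:B), v.2) (w.1, (0:B')) (u.1, (0:B')),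
      hrot (u.1, (0:B')) ((0:B), v.2) ((0:B), w.2),
      hrot ((0:B), u.2) (v.1, (0:B')) (w.1, (0:B')),
      hrot ((0:B), u.2) (v.1, (0:B')) ((0:B), w.2),
      hrot (v.1, (0:B')) ((0:B), w.2) ((0:B), u.2)]
    rw [p3 w.1 u.1 v.2, p3 v.1 w.1 u.2, p4 v.2 w.2 u.1, p4 w.2 u.2 v.1]
    simp


end
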